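/- arXiv:2211.03255 — 2 statements merged into one kernel-verified Lean document; each statement's English description precedes it below -/
import Mathlib

section
/- Any convex polygon with n ∈ {3, 4, 5} vertices containing a closed unit disk centered at o has a vertex v with |o − v| ≥ 1/cos(π/n) > 2/√3. -/
/-!
A unit direction `u` has `⟪u, v - o⟫ < 1` whenever `‖v - o‖ < 1 / cos (π / n)` and the angle
between `u` and `v - o` is at least `π / n`. The `n` open arcs of length `2π / n` around the
directions of the vertices cannot cover the circle (pigeonhole on the arguments), so if every
vertex were that close to `o`, some `u` would put the whole polygon in the open half-plane
`⟪u, x - o⟫ < 1`, which misses the point `o + u` of the disk. Finally `n < 6` gives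
`1 / cos (π / n) > 1 / cos (π / 6) = 2 / √3`.
-/

open Real Finset RealInnerProductSpace Module

theorem Finset.exists_le_abs_sub_le_sub (A : Finset ℝ) {c L δ : ℝ} (hδ : 0 < δ)
    (hA : ↑A ⊆ Set.Icc c (c + L)) (hcard : 2 * #A * δ ≤ L) :
    ∃ θ, ∀ a ∈ A, δ ≤ |θ - a| ∧ |θ - a| ≤ L - δ := by
  rcases A.eq_empty_or_nonempty with rfl | hne
  · simp
  set a₀ := A.min' hne
  have ha₀ : a₀ ∈ A := A.min'_mem hne
  -- The intervals `(a₀ + 2kδ, a₀ + 2(k+1)δ)`, `k < #A`, are disjoint and miss `a₀`,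
  -- so one of them contains no point of `A`; take `θ` at its centre.
  set slot : ℝ → ℕ := fun a ↦ ⌊(a - a₀) / (2 * δ)⌋₊
  obtain ⟨k, hk, hk_free⟩ : ∃ k ∈ range #A, k ∉ (A.erase a₀).image slot := by
    refine exists_mem_notMem_of_card_lt_card ?_
    calc #((A.erase a₀).image slot) ≤ #(A.erase a₀) := card_image_le
      _ < #A := card_erase_lt_of_mem ha₀
      _ = #(range #A) := (card_range _).symm
  have hk' : (k : ℝ) + 1 ≤ #A := by exact_mod_cast mem_range.mp hk
  refine ⟨a₀ + (2 * k + 1) * δ, fun a ha ↦ ⟨?_, ?_⟩⟩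
  · rcases eq_or_ne a a₀ with rfl | hne
    · rw [add_sub_cancel_left, abs_of_nonneg (by positivity)]
      nlinarith [k.cast_nonneg (α := ℝ)]
    by_contra! hlt
    have hslot : slot a = k := by
      rw [Nat.floor_eq_iff (div_nonneg (sub_nonneg.mpr (A.min'_le a ha)) (by positivity)),
        le_div_iff₀ (by positivity), div_lt_iff₀ (by positivity)]
      constructor <;> linarith [(abs_lt.mp hlt).1, (abs_lt.mp hlt).2]
    exact hk_free (mem_image.mpr ⟨a, mem_erase.mpr ⟨hne, ha⟩, hslot⟩)
  · have hmin : a₀ ≤ a := A.min'_le a ha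
    have hmax : a ≤ a₀ + L := by linarith [(hA ha).2, (hA ha₀).1]
    rw [abs_sub_le_iff]
    constructor <;> nlinarith [k.cast_nonneg (α := ℝ)]

theorem Real.cos_le_cos_of_le_abs_of_abs_le {δ x : ℝ} (hδ : 0 ≤ δ) (h₁ : δ ≤ |x|)
    (h₂ : |x| ≤ 2 * π - δ) : cos x ≤ cos δ := by
  rw [← cos_abs x]
  rcases le_or_gt |x| π with h | h
  · exact cos_le_cos_of_nonneg_of_le_pi hδ h h₁
  · rw [← cos_two_pi_sub]
    exact cos_le_cos_of_nonneg_of_le_pi hδ (by linarith) (by linarith)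

theorem Real.exists_forall_cos_sub_le_cos_pi_div (A : Finset ℝ) {n : ℕ} (hn : 0 < n)
    (hA : ↑A ⊆ Set.Icc (-π) π) (hcard : #A ≤ n) :
    ∃ θ, ∀ a ∈ A, cos (θ - a) ≤ cos (π / n) := by
  have hδ : 0 < π / n := by positivity
  have hgaps : 2 * #A * (π / n) ≤ π - -π := by
    have : (#A : ℝ) ≤ n := by exact_mod_cast hcard
    calc 2 * #A * (π / n) ≤ 2 * n * (π / n) := by gcongr
      _ = π - -π := by field_simp; ring
  obtain ⟨θ, hθ⟩ := A.exists_le_abs_sub_le_sub hδ (by rwa [add_sub_cancel]) hgaps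
  refine ⟨θ, fun a ha ↦ cos_le_cos_of_le_abs_of_abs_le hδ.le (hθ a ha).1 ?_⟩
  linarith [(hθ a ha).2]

theorem Complex.inner_exp_ofReal_mul_I (θ : ℝ) (w : ℂ) :
    ⟪exp (θ * I), w⟫ = ‖w‖ * Real.cos (θ - arg w) := by
  rw [Complex.inner, mul_re, conj_re, conj_im, exp_ofReal_mul_I_re, exp_ofReal_mul_I_im,
    Real.cos_sub, ← norm_mul_cos_arg w, ← norm_mul_sin_arg w]
  ring

theorem Complex.exists_norm_eq_one_forall_inner_lt_one (S : Finset ℂ) {n : ℕ} (hn : 0 < n)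
    (hcard : #S ≤ n) (hS : ∀ w ∈ S, ‖w‖ < 1 / Real.cos (π / n)) :
    ∃ u : ℂ, ‖u‖ = 1 ∧ ∀ w ∈ S, ⟪u, w⟫ < 1 := by
  obtain ⟨θ, hθ⟩ := Real.exists_forall_cos_sub_le_cos_pi_div (S.image arg) hn
    (by simpa [Set.subset_def] using fun w _ ↦ ⟨(neg_pi_lt_arg w).le, arg_le_pi w⟩)
    (card_image_le.trans hcard)
  refine ⟨exp (θ * I), norm_exp_ofReal_mul_I θ, fun w hw ↦ ?_⟩
  rw [inner_exp_ofReal_mul_I]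
  have hcos := hθ _ (mem_image_of_mem arg hw)
  calc ‖w‖ * Real.cos (θ - arg w) ≤ ‖w‖ * Real.cos (π / n) :=
        mul_le_mul_of_nonneg_left hcos (norm_nonneg w)
    _ < 1 := by
      rcases le_or_gt (Real.cos (π / n)) 0 with h | h
      · nlinarith [norm_nonneg w]
      · rw [← lt_div_iff₀ h]; exact hS w hw

theorem exists_mem_one_le_inner_sub_of_closedBall_subset_convexHull {E : Type*}
    [NormedAddCommGroup E] [InnerProductSpace ℝ E] {s : Set E} {o u : E}
    (hball : Metric.closedBall o 1 ⊆ convexHull ℝ s) (hu : ‖u‖ = 1) :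
    ∃ v ∈ s, 1 ≤ ⟪u, v - o⟫ := by
  by_contra! hs
  have hconv : Convex ℝ {x : E | ⟪u, x⟫ < ⟪u, o⟫ + 1} :=
    convex_halfSpace_lt (innerₛₗ ℝ u).isLinear _
  have hsub : s ⊆ {x : E | ⟪u, x⟫ < ⟪u, o⟫ + 1} := fun v hv ↦
    show ⟪u, v⟫ < ⟪u, o⟫ + 1 by linarith [hs v hv, inner_sub_right (𝕜 := ℝ) u v o]
  have hmem : o + u ∈ Metric.closedBall o 1 := by simp [hu]
  have := convexHull_min hsub hconv (hball hmem)
  simp [inner_add_right, hu] at this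

theorem exists_mem_inv_cos_pi_div_le_dist_of_closedBall_subset_convexHull {E : Type*}
    [NormedAddCommGroup E] [InnerProductSpace ℝ E] (hE : finrank ℝ E = 2) {F : Finset E} {o : E}
    {n : ℕ} (hn : 0 < n) (hcard : #F ≤ n)
    (hball : Metric.closedBall o 1 ⊆ convexHull ℝ ↑F) :
    ∃ v ∈ F, 1 / Real.cos (π / n) ≤ dist o v := by
  by_contra! hF
  have : FiniteDimensional ℝ E := Module.finite_of_finrank_eq_succ hE
  let f : ℂ ≃ₗᵢ[ℝ] E :=
    Complex.isometryOfOrthonormal ((stdOrthonormalBasis ℝ E).reindex (finCongr hE))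
  obtain ⟨u, hu, hinner⟩ := Complex.exists_norm_eq_one_forall_inner_lt_one
    (F.image fun v ↦ f.symm (v - o)) hn (card_image_le.trans hcard)
    (by simpa only [forall_mem_image, f.symm.norm_map, ← dist_eq_norm, dist_comm] using hF)
  obtain ⟨v, hv, hle⟩ := exists_mem_one_le_inner_sub_of_closedBall_subset_convexHull hball
    ((f.norm_map u).trans hu)
  have := hinner _ (mem_image_of_mem _ hv)
  rw [← f.inner_map_map, f.apply_symm_apply] at this
  linarith

theorem two_div_sqrt_three_lt_inv_cos_pi_div {n : ℕ} (h3 : 3 ≤ n) (h6 : n < 6) :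
    2 / √3 < 1 / Real.cos (π / n) := by
  have hn0 : (0 : ℝ) < n := by positivity
  have hle : π / n ≤ π / 3 :=
    div_le_div_of_nonneg_left pi_pos.le (by norm_num) (by exact_mod_cast h3)
  have hpos : 0 < Real.cos (π / n) :=
    Real.cos_pos_of_mem_Ioo ⟨by linarith [pi_pos, div_pos pi_pos hn0], by linarith [pi_pos]⟩
  have hlt : Real.cos (π / n) < √3 / 2 := by
    rw [← cos_pi_div_six]
    exact Real.cos_lt_cos_of_nonneg_of_le_pi (by positivity) (by linarith [pi_pos])
      (div_lt_div_of_pos_left pi_pos hn0 (by exact_mod_cast h6))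
  rw [div_lt_div_iff₀ (by positivity) hpos]
  linarith

theorem stmt_14_general (n : ℕ) (hn : n = 3 ∨ n = 4 ∨ n = 5)
    (P : Set (EuclideanSpace ℝ (Fin 2))) (o : EuclideanSpace ℝ (Fin 2))
    (F : Finset (EuclideanSpace ℝ (Fin 2))) (hP : P = convexHull ℝ (F : Set _))
    (hcard : F.card = n)
    (hball : Metric.closedBall o 1 ⊆ P) :
    ∃ v ∈ F, 1 / Real.cos (Real.pi / n) ≤ dist o v ∧
      2 / Real.sqrt 3 < 1 / Real.cos (Real.pi / n) := by
  subst hP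
  obtain ⟨v, hv, hdist⟩ := exists_mem_inv_cos_pi_div_le_dist_of_closedBall_subset_convexHull
    finrank_euclideanSpace_fin (by omega) hcard.le hball
  exact ⟨v, hv, hdist, two_div_sqrt_three_lt_inv_cos_pi_div (by omega) (by omega)⟩

theorem stmt_14 (n : ℕ) (hn : n = 3 ∨ n = 4 ∨ n = 5)
    (P : Set (EuclideanSpace ℝ (Fin 2))) (o : EuclideanSpace ℝ (Fin 2))
    (F : Finset (EuclideanSpace ℝ (Fin 2))) (hP : P = convexHull ℝ (F : Set _))
    (hF : Set.extremePoints ℝ P = (F : Set _)) (hcard : F.card = n)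
    (hball : Metric.closedBall o 1 ⊆ P) :
    ∃ v ∈ F, 1 / Real.cos (Real.pi / n) ≤ dist o v ∧
      2 / Real.sqrt 3 < 1 / Real.cos (Real.pi / n) :=
  stmt_14_general n hn P o F hP hcard hball
end

section
/- In an admissible set S ⊆ ℝ² with x ∈ S having a bounded Voronoi cell, every vertex u of the polygon V(x) satisfies |u − x| ≥ 2/√3. -/
/-!
If at most one point `y ≠ x` of `S` were at the same distance from `u` as `x`, then moving `u`
slightly in either direction along the common bisector of `x` and `y` (any direction, if there is
no such `y`) would keep it in the Voronoi cell, because the finitely many nearby points of the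
separated set `S` are strictly farther away. So an extreme point `u` is equidistant from `x` and two
further points of `S`, and a circle through three points at mutual distance `≥ 2` has radius
`≥ 2 / √3`.
-/

open Set Metric Filter Topology Module
open scoped RealInnerProductSpace

section Separated

variable {X : Type*} [MetricSpace X] [ProperSpace X] {S : Set X} {δ : ℝ}

lemma finite_inter_closedBall_of_le_dist (hδ : 0 < δ)
    (hS : ∀ y ∈ S, ∀ y' ∈ S, y ≠ y' → δ ≤ dist y y') (c : X) (R : ℝ) :
    (S ∩ closedBall c R).Finite := by
  obtain ⟨t, -, ht, hcov⟩ := finite_approx_of_totallyBounded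
    (isCompact_closedBall c R).totallyBounded (δ / 2) (half_pos hδ)
  have hpiece : ∀ z ∈ t, (S ∩ ball z (δ / 2)).Subsingleton := by
    intro z _ y hy y' hy'
    by_contra hne
    have := dist_triangle_right y y' z
    linarith [hS y hy.1 y' hy'.1 hne, mem_ball.1 hy.2, mem_ball.1 hy'.2]
  refine (ht.biUnion fun z hz => (hpiece z hz).finite).subset fun y hy => ?_
  obtain ⟨z, hz, hyz⟩ := mem_iUnion₂.1 (hcov hy.2)
  exact mem_iUnion₂.2 ⟨z, hz, hy.1, hyz⟩

lemma exists_pos_forall_add_le_dist_of_lt (hδ : 0 < δ)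
    (hS : ∀ y ∈ S, ∀ y' ∈ S, y ≠ y' → δ ≤ dist y y') (x u : X) :
    ∃ ε > 0, ∀ y ∈ S, dist x u < dist y u → dist x u + ε ≤ dist y u := by
  have hnear : ∀ᶠ ε in 𝓝 (0 : ℝ), ε ≤ 1 ∧ ∀ y ∈ S ∩ closedBall u (dist x u + 1),
      dist x u < dist y u → dist x u + ε ≤ dist y u := by
    refine (eventually_le_nhds one_pos).and
      ((eventually_all_finite (finite_inter_closedBall_of_le_dist hδ hS u _)).2 fun y _ => ?_)
    by_cases hy : dist x u < dist y u
    · exact (eventually_lt_nhds (sub_pos.2 hy)).mono fun ε hε _ => by linarith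
    · exact .of_forall fun _ h => absurd h hy
  obtain ⟨ε, ⟨hε1, hε⟩, hε0⟩ := ((hnear.filter_mono nhdsWithin_le_nhds).and
    (self_mem_nhdsWithin : ∀ᶠ ε in 𝓝[>] (0 : ℝ), 0 < ε)).exists
  refine ⟨ε, hε0, fun y hy hlt => ?_⟩
  by_cases hyu : dist y u ≤ dist x u + 1
  · exact hε y ⟨hy, by rwa [mem_closedBall]⟩ hlt
  · linarith

end Separated

def voronoiCell {X : Type*} [MetricSpace X] (S : Set X) (x : X) : Set X :=
  {z | ∀ y ∈ S, dist x z ≤ dist y z}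

section Voronoi

variable {E : Type*} [NormedAddCommGroup E] [InnerProductSpace ℝ E] {S : Set E} {x u : E}

lemma add_mem_voronoiCell (hu : u ∈ voronoiCell S x) {ε : ℝ}
    (hε : ∀ y ∈ S, dist x u < dist y u → dist x u + ε ≤ dist y u) {d : E} (hd : 2 * ‖d‖ ≤ ε)
    (horth : ∀ y ∈ S, dist y u = dist x u → ⟪y - x, d⟫ = 0) :
    u + d ∈ voronoiCell S x := by
  intro y hy
  rcases (hu y hy).lt_or_eq with hlt | heq
  · have hx := dist_triangle x u (u + d)
    have hy' := dist_triangle_right y u (u + d)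
    rw [dist_self_add_right] at hx hy'
    linarith [hε y hy hlt]
  · have hbis : u ∈ AffineSubspace.perpBisector x y :=
      AffineSubspace.mem_perpBisector_iff_dist_eq'.2 heq
    have hdir : d ∈ (AffineSubspace.perpBisector x y).direction := by
      rw [AffineSubspace.direction_perpBisector, vsub_eq_sub,
        Submodule.mem_orthogonal_singleton_iff_inner_right]
      exact horth y hy heq.symm
    have := AffineSubspace.vadd_mem_of_mem_direction hdir hbis
    rw [vadd_eq_add, add_comm] at this
    exact (AffineSubspace.mem_perpBisector_iff_dist_eq'.1 this).le

theorem eq_zero_of_mem_extremePoints_voronoiCell [ProperSpace E] {δ : ℝ} (hδ : 0 < δ)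
    (hS : ∀ y ∈ S, ∀ y' ∈ S, y ≠ y' → δ ≤ dist y y') (hu : u ∈ (voronoiCell S x).extremePoints ℝ)
    {v : E} (hv : ∀ y ∈ S, dist y u = dist x u → ⟪y - x, v⟫ = 0) : v = 0 := by
  obtain ⟨ε, hε0, hε⟩ := exists_pos_forall_add_le_dist_of_lt hδ hS x u
  by_contra hv0
  set d := (ε / (2 * ‖v‖)) • v
  have hd : 2 * ‖d‖ = ε := by
    have := norm_pos_iff.2 hv0
    rw [norm_smul, Real.norm_of_nonneg (by positivity)]
    field_simp
  have horth : ∀ y ∈ S, dist y u = dist x u → ⟪y - x, d⟫ = 0 := fun y hy h => by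
    rw [inner_smul_right, hv y hy h, mul_zero]
  have hplus := add_mem_voronoiCell hu.1 hε hd.le horth
  have hminus := add_mem_voronoiCell hu.1 hε (d := -d) (by rw [norm_neg]; exact hd.le) fun y hy h => by
    rw [inner_neg_right, horth y hy h, neg_zero]
  have hmid : u ∈ openSegment ℝ (u + d) (u + -d) :=
    ⟨1 / 2, 1 / 2, by norm_num, by norm_num, by norm_num, by module⟩
  have hd0 : d = 0 := by simpa using hu.2 hplus hminus hmid
  rw [hd0, norm_zero] at hd
  linarith

lemma exists_ne_zero_inner_eq_zero (hE : 2 ≤ finrank ℝ E) (w : E) : ∃ v ≠ 0, ⟪w, v⟫ = 0 := by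
  have : FiniteDimensional ℝ E := Module.finite_of_finrank_pos (by omega)
  have hspan : finrank ℝ (ℝ ∙ w) ≤ 1 := (finrank_span_le_card ({w} : Set E)).trans (by simp)
  have hperp : (ℝ ∙ w)ᗮ ≠ ⊥ := by
    intro h
    have := (ℝ ∙ w).finrank_add_finrank_orthogonal
    rw [h, finrank_bot] at this
    omega
  obtain ⟨v, hv, hv0⟩ := (Submodule.ne_bot_iff _).1 hperp
  exact ⟨v, hv0, Submodule.mem_orthogonal_singleton_iff_inner_right.1 hv⟩

theorem exists_two_equidistant_of_mem_extremePoints_voronoiCell [ProperSpace E]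
    (hE : 2 ≤ finrank ℝ E) {δ : ℝ} (hδ : 0 < δ)
    (hS : ∀ y ∈ S, ∀ y' ∈ S, y ≠ y' → δ ≤ dist y y') (hu : u ∈ (voronoiCell S x).extremePoints ℝ) :
    ∃ y₁ ∈ S, ∃ y₂ ∈ S, y₁ ≠ x ∧ y₂ ≠ x ∧ y₁ ≠ y₂ ∧
      dist y₁ u = dist x u ∧ dist y₂ u = dist x u := by
  by_contra! h
  obtain ⟨w, hw⟩ : ∃ w : E, ∀ y ∈ S, y ≠ x → dist y u = dist x u → y - x = w := by
    by_cases hex : ∃ y₁ ∈ S, y₁ ≠ x ∧ dist y₁ u = dist x u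
    · obtain ⟨y₁, hy₁, hy₁x, hd₁⟩ := hex
      refine ⟨y₁ - x, fun y hy hyx hd => ?_⟩
      by_contra hne
      exact h y₁ hy₁ y hy hy₁x hyx (fun e => hne (e ▸ rfl)) hd₁ hd
    · push Not at hex
      exact ⟨0, fun y hy hyx hd => absurd hd (hex y hy hyx)⟩
  obtain ⟨v, hv0, hwv⟩ := exists_ne_zero_inner_eq_zero hE w
  refine hv0 (eq_zero_of_mem_extremePoints_voronoiCell hδ hS hu fun y hy hd => ?_)
  by_cases hyx : y = x
  · rw [hyx, sub_self, inner_zero_left]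
  · rw [hw y hy hyx hd, hwv]

lemma sq_le_three_mul_sq_of_dist_eq {p₁ p₂ p₃ c : E} {r δ : ℝ} (h₁ : dist p₁ c = r)
    (h₂ : dist p₂ c = r) (h₃ : dist p₃ c = r) (hδ : 0 ≤ δ) (h₁₂ : δ ≤ dist p₁ p₂)
    (h₁₃ : δ ≤ dist p₁ p₃) (h₂₃ : δ ≤ dist p₂ p₃) : δ ^ 2 ≤ 3 * r ^ 2 := by
  have leibniz : ∀ a b c : E, ‖a - b‖ ^ 2 + ‖a - c‖ ^ 2 + ‖b - c‖ ^ 2 + ‖a + b + c‖ ^ 2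
      = 3 * (‖a‖ ^ 2 + ‖b‖ ^ 2 + ‖c‖ ^ 2) := fun a b c => by
    rw [norm_sub_sq_real, norm_sub_sq_real, norm_sub_sq_real, norm_add_sq_real,
      norm_add_sq_real, inner_add_left]
    ring
  have key := leibniz (p₁ - c) (p₂ - c) (p₃ - c)
  simp only [sub_sub_sub_cancel_right, ← dist_eq_norm] at key
  rw [h₁, h₂, h₃] at key
  nlinarith [sq_nonneg ‖p₁ - c + (p₂ - c) + (p₃ - c)‖, mul_le_mul h₁₂ h₁₂ hδ dist_nonneg,
    mul_le_mul h₁₃ h₁₃ hδ dist_nonneg, mul_le_mul h₂₃ h₂₃ hδ dist_nonneg]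

end Voronoi

theorem stmt_16_general (S : Set (EuclideanSpace ℝ (Fin 2)))
    (hadm : ∀ y ∈ S, ∀ y' ∈ S, y ≠ y' → 2 ≤ dist y y')
    (x : EuclideanSpace ℝ (Fin 2)) (hx : x ∈ S)
    (u : EuclideanSpace ℝ (Fin 2))
    (hu : u ∈ Set.extremePoints ℝ {z | ∀ y ∈ S, dist x z ≤ dist y z}) :
    2 / Real.sqrt 3 ≤ dist u x := by
  obtain ⟨y₁, hy₁, y₂, hy₂, hy₁x, hy₂x, hy₁₂, hd₁, hd₂⟩ :=
    exists_two_equidistant_of_mem_extremePoints_voronoiCell (by simp) two_pos hadm hu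
  have hr := sq_le_three_mul_sq_of_dist_eq rfl hd₁ hd₂ zero_le_two
    (hadm x hx y₁ hy₁ hy₁x.symm) (hadm x hx y₂ hy₂ hy₂x.symm) (hadm y₁ hy₁ y₂ hy₂ hy₁₂)
  rw [dist_comm, div_le_iff₀ (by positivity)]
  nlinarith [Real.sq_sqrt (show (0 : ℝ) ≤ 3 by norm_num), Real.sqrt_nonneg 3,
    mul_nonneg (dist_nonneg (x := x) (y := u)) (Real.sqrt_nonneg 3)]

theorem stmt_16 (S : Set (EuclideanSpace ℝ (Fin 2)))
    (hadm : ∀ y ∈ S, ∀ y' ∈ S, y ≠ y' → 2 ≤ dist y y')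
    (x : EuclideanSpace ℝ (Fin 2)) (hx : x ∈ S)
    (hbdd : Bornology.IsBounded {z | ∀ y ∈ S, dist x z ≤ dist y z})
    (u : EuclideanSpace ℝ (Fin 2))
    (hu : u ∈ Set.extremePoints ℝ {z | ∀ y ∈ S, dist x z ≤ dist y z}) :
    2 / Real.sqrt 3 ≤ dist u x :=
  stmt_16_general S hadm x hx u hu
end
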